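/- arXiv:1607.01151 — 2 statements merged into one kernel-verified Lean document; each statement's English description precedes it below -/
import Mathlib

section
/- Let f, g_1, ..., g_m ∈ ℝ[x] with K = {x ∈ ℝⁿ : 0 ≤ g_j(x) ≤ 1, j=1,...,m} compact. Suppose the polynomials 1 and g_1, ..., g_m generate ℝ[x] as an ℝ-algebra and f is strictly positive on K. Then there exist finitely many positive scalars c_{αβ}, for (α,β) ∈ ℕ₀^{2m}, such that f = Σ_{α,β} c_{αβ} Π_{j=1}^m g_j^{α_j}(1−g_j)^{β_j}. -/
open Finset MvPolynomial

/-- One-variable Bernstein identity (ℕ-smul form). -/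
lemma bern_nat {A : Type*} [CommRing A] (x : A) {r N : ℕ} (h : r ≤ N) :
    ∑ k ∈ range (N+1), (N.choose k * k.choose r) • (x ^ k * (1-x) ^ (N-k))
      = N.choose r • x ^ r := by
  have hsub : Ico r (N+1) ⊆ range (N+1) := by
    intro k hk; simp only [mem_Ico, mem_range] at *; exact hk.2
  rw [← Finset.sum_subset hsub (by
    intro k hk1 hk
    simp only [mem_Ico, mem_range, not_and, not_lt] at hk hk1
    rcases lt_or_ge k r with hlt | hle
    · rw [Nat.choose_eq_zero_of_lt hlt, Nat.mul_zero, zero_smul]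
    · omega)]
  rw [Finset.sum_Ico_eq_sum_range]
  have hNr : N + 1 - r = (N - r) + 1 := by omega
  rw [hNr]
  have key : ∀ i ∈ range (N - r + 1),
      (N.choose (r+i) * (r+i).choose r) • (x ^ (r+i) * (1-x) ^ (N-(r+i)))
        = N.choose r • (x ^ r * ((N-r).choose i • (x ^ i * (1-x) ^ (N-r-i)))) := by
    intro i hi
    simp only [mem_range] at hi
    have h1 : N.choose (r+i) * (r+i).choose r = N.choose r * (N-r).choose i := by
      have := Nat.choose_mul (n := N) (k := r + i) (s := r) (by omega)
      simpa [Nat.add_sub_cancel_left] using this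
    have h2 : N - (r+i) = N - r - i := by omega
    rw [h1, h2]
    simp only [nsmul_eq_mul, Nat.cast_mul, pow_add]
    ring
  rw [Finset.sum_congr rfl key, ← Finset.smul_sum, ← Finset.mul_sum]
  have binom : ∑ i ∈ range (N - r + 1), (N-r).choose i • (x ^ i * (1-x) ^ (N-r-i)) = 1 := by
    have h2 := add_pow x (1-x) (N-r)
    have h3 : x + (1-x) = 1 := by ring
    rw [h3, one_pow] at h2
    exact (Finset.sum_congr rfl (fun i _ => by rw [nsmul_eq_mul]; ring)).trans h2.symm
  rw [binom, mul_one]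

lemma bern_real {A : Type*} [CommRing A] [Algebra ℝ A] (x : A) {r N : ℕ} (h : r ≤ N) :
    x ^ r = ∑ k ∈ range (N+1),
      (((N.choose k * k.choose r : ℕ) : ℝ) / (N.choose r : ℝ)) • (x ^ k * (1-x) ^ (N-k)) := by
  have hc : (0:ℝ) < (N.choose r : ℝ) := by exact_mod_cast Nat.choose_pos h
  have h2 : ∑ k ∈ range (N+1), ((N.choose k * k.choose r : ℕ) : ℝ) • (x^k * (1-x)^(N-k))
      = ((N.choose r : ℕ) : ℝ) • x ^ r := by
    rw [show ((N.choose r : ℕ) : ℝ) • x ^ r = N.choose r • x ^ r from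
      Nat.cast_smul_eq_nsmul ℝ _ _, ← bern_nat x h]
    exact Finset.sum_congr rfl fun k _ => Nat.cast_smul_eq_nsmul ℝ _ _
  have h3 : x ^ r = (N.choose r : ℝ)⁻¹ •
      ∑ k ∈ range (N+1), ((N.choose k * k.choose r : ℕ) : ℝ) • (x^k * (1-x)^(N-k)) := by
    rw [h2, smul_smul, inv_mul_cancel₀ hc.ne', one_smul]
  rw [h3, Finset.smul_sum]
  exact Finset.sum_congr rfl fun k _ => by rw [smul_smul, div_eq_inv_mul]

lemma prod_smul'' {ι : Type*} {A : Type*} [CommRing A] [Algebra ℝ A] (s : Finset ι)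
    (c : ι → ℝ) (f : ι → A) :
    ∏ i ∈ s, (c i • f i) = (∏ i ∈ s, c i) • ∏ i ∈ s, f i := by
  induction s using Finset.cons_induction with
  | empty => simp
  | cons a s ha ih =>
    rw [Finset.prod_cons, Finset.prod_cons, Finset.prod_cons, ih, smul_mul_smul_comm]

lemma bern_multi {m : ℕ} (N : ℕ) (r : Fin m → ℕ) (hr : ∀ j, r j ≤ N) :
    (∏ j, (X j : MvPolynomial (Fin m) ℝ) ^ r j) =
      ∑ k ∈ Fintype.piFinset (fun _ : Fin m => range (N+1)),
        (∏ j, (((N.choose (k j) * (k j).choose (r j) : ℕ) : ℝ) / (N.choose (r j) : ℝ))) •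
          ∏ j, ((X j : MvPolynomial (Fin m) ℝ) ^ k j * (1 - X j) ^ (N - k j)) := by
  have h1 : (∏ j, (X j : MvPolynomial (Fin m) ℝ) ^ r j) = ∏ j, ∑ a ∈ range (N+1),
      (((N.choose a * a.choose (r j) : ℕ) : ℝ) / (N.choose (r j) : ℝ)) •
        ((X j : MvPolynomial (Fin m) ℝ) ^ a * (1 - X j) ^ (N - a)) :=
    Finset.prod_congr rfl fun j _ => bern_real _ (hr j)
  rw [h1, Finset.prod_univ_sum]
  exact Finset.sum_congr rfl fun k _ => prod_smul'' _ _ _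

lemma bern_rep {m : ℕ} (p : MvPolynomial (Fin m) ℝ) {N : ℕ} (hN : p.totalDegree ≤ N) :
    p = ∑ k ∈ Fintype.piFinset (fun _ : Fin m => range (N+1)),
        (∑ r ∈ p.support, coeff r p *
          ∏ j, (((N.choose (k j) * (k j).choose (r j) : ℕ) : ℝ) / (N.choose (r j) : ℝ))) •
        ∏ j, ((X j : MvPolynomial (Fin m) ℝ) ^ k j * (1 - X j) ^ (N - k j)) := by
  have hrN : ∀ r ∈ p.support, ∀ j, r j ≤ N := by
    intro r hr j
    have h1 : r j ≤ r.sum fun _ e => e := by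
      by_cases hj : j ∈ r.support
      · exact Finset.single_le_sum (fun _ _ => Nat.zero_le _) hj
      · simp [Finsupp.notMem_support_iff.mp hj]
    exact h1.trans ((le_totalDegree hr).trans hN)
  conv_lhs => rw [as_sum p]
  have hmono : ∀ r ∈ p.support, (monomial r (coeff r p) : MvPolynomial (Fin m) ℝ)
      = coeff r p • ∑ k ∈ Fintype.piFinset (fun _ : Fin m => range (N+1)),
        (∏ j, (((N.choose (k j) * (k j).choose (r j) : ℕ) : ℝ) / (N.choose (r j) : ℝ))) •
          ∏ j, ((X j : MvPolynomial (Fin m) ℝ) ^ k j * (1 - X j) ^ (N - k j)) := by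
    intro r hr
    rw [← bern_multi N (fun j => r j) (hrN r hr), monomial_eq, smul_eq_C_mul]
    congr 1
    exact Finsupp.prod_fintype _ _ (fun j => pow_zero _)
  rw [Finset.sum_congr rfl hmono]
  simp only [Finset.smul_sum, smul_smul]
  rw [Finset.sum_comm]
  exact Finset.sum_congr rfl fun k _ => by rw [Finset.sum_smul]

lemma pow_sub_pow_le' {s t : ℝ} (h0 : 0 ≤ s) (hst : s ≤ t) (h1 : t ≤ 1) (r : ℕ) :
    t ^ r - s ^ r ≤ r * (t - s) := by
  induction r with
  | zero => simp
  | succ r ih =>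
    have hs1 : s ≤ 1 := hst.trans h1
    have ht0 : 0 ≤ t := h0.trans hst
    have hsr : s ^ r ≤ t ^ r := pow_le_pow_left₀ h0 hst r
    have hsr1 : s ^ r ≤ 1 := pow_le_one₀ h0 hs1
    have hsr0 : 0 ≤ s ^ r := pow_nonneg h0 r
    have h2 : t ^ (r+1) - s ^ (r+1) = t * (t ^ r - s ^ r) + (t - s) * s ^ r := by ring
    push_cast
    nlinarith

lemma prod_sub_prod_le' {ι : Type*} (s : Finset ι) (f g : ι → ℝ) (h0 : ∀ i ∈ s, 0 ≤ f i)
    (hfg : ∀ i ∈ s, f i ≤ g i) (h1 : ∀ i ∈ s, g i ≤ 1) :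
    ∏ i ∈ s, g i - ∏ i ∈ s, f i ≤ ∑ i ∈ s, (g i - f i) := by
  induction s using Finset.cons_induction with
  | empty => simp
  | cons a s ha ih =>
    simp only [Finset.prod_cons, Finset.sum_cons]
    have h0' : ∀ i ∈ s, 0 ≤ f i := fun i hi => h0 i (Finset.mem_cons_of_mem hi)
    have hfg' : ∀ i ∈ s, f i ≤ g i := fun i hi => hfg i (Finset.mem_cons_of_mem hi)
    have h1' : ∀ i ∈ s, g i ≤ 1 := fun i hi => h1 i (Finset.mem_cons_of_mem hi)
    have ihs := ih h0' hfg' h1'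
    have hPf0 : 0 ≤ ∏ i ∈ s, f i := Finset.prod_nonneg h0'
    have hPfg : ∏ i ∈ s, f i ≤ ∏ i ∈ s, g i := Finset.prod_le_prod h0' hfg'
    have hPf1 : ∏ i ∈ s, f i ≤ 1 :=
      Finset.prod_le_one h0' (fun i hi => (hfg' i hi).trans (h1' i hi))
    have ha0 : 0 ≤ f a := h0 a (Finset.mem_cons_self a s)
    have hafg : f a ≤ g a := hfg a (Finset.mem_cons_self a s)
    have ha1 : g a ≤ 1 := h1 a (Finset.mem_cons_self a s)
    nlinarith

lemma desc_ratio_bounds {N k d r : ℕ} (hk : k ≤ N) (hd : d ≤ N) (hr : r ≤ d) :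
    (((k - d : ℕ) : ℝ) / N) ^ r ≤ (k.descFactorial r : ℝ) / (N.descFactorial r) ∧
      (k.descFactorial r : ℝ) / (N.descFactorial r) ≤ ((k : ℝ) / N) ^ r := by
  rcases Nat.eq_zero_or_pos r with hr0 | hrpos
  · subst hr0; simp
  have hN0 : 0 < N := lt_of_lt_of_le hrpos (hr.trans hd)
  have hNR : (0:ℝ) < N := by exact_mod_cast hN0
  have hratio : (k.descFactorial r : ℝ) / (N.descFactorial r)
      = ∏ i ∈ range r, ((k - i : ℕ) : ℝ) / ((N - i : ℕ) : ℝ) := by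
    rw [Nat.descFactorial_eq_prod_range, Nat.descFactorial_eq_prod_range]
    push_cast
    rw [Finset.prod_div_distrib]
  have hden : ∀ i ∈ range r, (0:ℝ) < ((N - i : ℕ) : ℝ) := by
    intro i hi
    simp only [mem_range] at hi
    have : 0 < N - i := by omega
    exact_mod_cast this
  constructor
  · rw [hratio]
    have := Finset.prod_le_prod (s := range r)
      (f := fun _ => ((k - d : ℕ) : ℝ) / N)
      (g := fun i => ((k - i : ℕ) : ℝ) / ((N - i : ℕ) : ℝ))
      (fun i _ => div_nonneg (Nat.cast_nonneg _) hNR.le)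
      (fun i hi => by
        rw [div_le_div_iff₀ hNR (hden i hi)]
        have hnat : (k - d) * (N - i) ≤ (k - i) * N := by
          simp only [mem_range] at hi
          exact Nat.mul_le_mul (Nat.sub_le_sub_left (by omega) k) (Nat.sub_le N i)
        exact_mod_cast hnat)
    simpa [Finset.prod_const, Finset.card_range, div_pow] using this
  · rw [hratio]
    have := Finset.prod_le_prod (s := range r)
      (f := fun i => ((k - i : ℕ) : ℝ) / ((N - i : ℕ) : ℝ))
      (g := fun _ => (k : ℝ) / N)
      (fun i hi => div_nonneg (Nat.cast_nonneg _) (hden i hi).le)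
      (fun i hi => by
        rw [div_le_div_iff₀ (hden i hi) hNR]
        have hnat : (k - i) * N ≤ k * (N - i) := by
          rcases le_or_gt i k with h | h
          · have hiN : i ≤ N := le_trans h hk
            have hkN : (k:ℤ) ≤ N := by exact_mod_cast hk
            have hi0 : (0:ℤ) ≤ i := Int.ofNat_nonneg i
            zify [h, hiN]
            nlinarith
          · simp [Nat.sub_eq_zero_of_le h.le]
        exact_mod_cast hnat)
    simpa [Finset.prod_const, Finset.card_range, div_pow] using this
lemma bern_coeff_est {m : ℕ} (p : MvPolynomial (Fin m) ℝ) {ε : ℝ} (hε : 0 < ε) :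
    ∃ N₀ : ℕ, ∀ N : ℕ, N₀ ≤ N → ∀ k : Fin m → ℕ, (∀ j, k j ≤ N) →
      |(∑ r ∈ p.support, coeff r p *
          ∏ j, ((k j).descFactorial (r j) : ℝ) / (N.descFactorial (r j))) -
        eval (fun j => (k j : ℝ) / N) p| ≤ ε := by
  set d := p.totalDegree with hd
  set A := ∑ r ∈ p.support, |coeff r p| with hA
  have hA0 : 0 ≤ A := Finset.sum_nonneg fun _ _ => abs_nonneg _
  obtain ⟨M, hM⟩ := exists_nat_gt (A * d * d / ε)
  refine ⟨max (d + 1) (M + 1), fun N hN k hk => ?_⟩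
  have hdN : d ≤ N := by
    have := le_trans (le_max_left (d+1) (M+1)) hN; omega
  have hMN : M + 1 ≤ N := le_trans (le_max_right _ _) hN
  have hNpos : 0 < N := by omega
  have hNR : (0:ℝ) < N := by exact_mod_cast hNpos
  -- per-exponent facts
  have hrj : ∀ r ∈ p.support, ∀ j, r j ≤ d := by
    intro r hr j
    have h1 : r j ≤ r.sum fun _ e => e := by
      by_cases hj : j ∈ r.support
      · exact Finset.single_le_sum (fun _ _ => Nat.zero_le _) hj
      · simp [Finsupp.notMem_support_iff.mp hj]
    exact h1.trans (le_totalDegree hr)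
  have hsum_r : ∀ r ∈ p.support, (∑ j, r j) ≤ d := by
    intro r hr
    have : r.sum (fun _ e => e) = ∑ j, r j := Finsupp.sum_fintype _ _ (fun _ => rfl)
    rw [← this]
    exact le_totalDegree hr
  -- the pointwise estimate for each monomial
  have key : ∀ r ∈ p.support,
      |(∏ j, ((k j).descFactorial (r j) : ℝ) / (N.descFactorial (r j))) -
        ∏ j, ((k j : ℝ) / N) ^ r j| ≤ (d : ℝ) * d / N := by
    intro r hr
    set t : Fin m → ℝ := fun j => (k j : ℝ) / N with ht
    set l : Fin m → ℝ := fun j => ((k j - d : ℕ) : ℝ) / N with hl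
    set u : Fin m → ℝ := fun j => ((k j).descFactorial (r j) : ℝ) / (N.descFactorial (r j))
      with hu
    have hl0 : ∀ j, 0 ≤ l j := fun j => div_nonneg (Nat.cast_nonneg _) hNR.le
    have hlt : ∀ j, l j ≤ t j := by
      intro j
      show ((k j - d : ℕ) : ℝ) / N ≤ (k j : ℝ) / N
      gcongr
      exact_mod_cast Nat.sub_le _ _
    have ht0 : ∀ j, 0 ≤ t j := fun j => div_nonneg (Nat.cast_nonneg _) hNR.le
    have ht1 : ∀ j, t j ≤ 1 := by
      intro j
      show (k j : ℝ) / N ≤ 1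
      rw [div_le_one hNR]
      exact_mod_cast hk j
    have htl : ∀ j, t j - l j ≤ (d : ℝ) / N := by
      intro j
      have hnat : k j ≤ (k j - d) + d := by omega
      have hcast : (k j : ℝ) ≤ ((k j - d : ℕ) : ℝ) + d := by exact_mod_cast hnat
      have : t j - l j = ((k j : ℝ) - ((k j - d : ℕ) : ℝ)) / N := by
        rw [ht, hl, div_sub_div_same]
      rw [this]
      gcongr
      linarith
    have hbounds := fun j => desc_ratio_bounds (N := N) (k := k j) (d := d) (r := r j)
      (hk j) hdN (hrj r hr j)
    have hlb : ∀ j, l j ^ r j ≤ u j := fun j => (hbounds j).1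
    have hub : ∀ j, u j ≤ t j ^ r j := fun j => (hbounds j).2
    have hu0 : ∀ j, 0 ≤ u j := fun j => le_trans (pow_nonneg (hl0 j) _) (hlb j)
    have hU_le_V : (∏ j, u j) ≤ ∏ j, t j ^ r j :=
      Finset.prod_le_prod (fun j _ => hu0 j) (fun j _ => hub j)
    have hL_le_U : (∏ j, l j ^ r j) ≤ ∏ j, u j :=
      Finset.prod_le_prod (fun j _ => pow_nonneg (hl0 j) _) (fun j _ => hlb j)
    have hdiff : (∏ j, t j ^ r j) - ∏ j, l j ^ r j ≤ ∑ j, (t j ^ r j - l j ^ r j) :=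
      prod_sub_prod_le' Finset.univ _ _ (fun j _ => pow_nonneg (hl0 j) _)
        (fun j _ => pow_le_pow_left₀ (hl0 j) (hlt j) _)
        (fun j _ => pow_le_one₀ (ht0 j) (ht1 j))
    have heach : ∀ j, t j ^ r j - l j ^ r j ≤ (r j : ℝ) * ((d:ℝ) / N) := by
      intro j
      refine le_trans (pow_sub_pow_le' (hl0 j) (hlt j) (ht1 j) (r j)) ?_
      exact mul_le_mul_of_nonneg_left (htl j) (Nat.cast_nonneg _)
    have hsum : ∑ j, (t j ^ r j - l j ^ r j) ≤ (d : ℝ) * ((d:ℝ) / N) := by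
      refine le_trans (Finset.sum_le_sum (fun j _ => heach j)) ?_
      rw [← Finset.sum_mul]
      refine mul_le_mul_of_nonneg_right ?_ (div_nonneg (Nat.cast_nonneg _) hNR.le)
      exact_mod_cast hsum_r r hr
    rw [abs_sub_comm, abs_of_nonneg (sub_nonneg.mpr hU_le_V)]
    calc (∏ j, t j ^ r j) - ∏ j, u j ≤ (∏ j, t j ^ r j) - ∏ j, l j ^ r j := by linarith
    _ ≤ ∑ j, (t j ^ r j - l j ^ r j) := hdiff
    _ ≤ (d : ℝ) * ((d:ℝ) / N) := hsum
    _ = (d : ℝ) * d / N := by ring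
  -- sum up
  rw [eval_eq']
  rw [← Finset.sum_sub_distrib]
  refine le_trans (Finset.abs_sum_le_sum_abs _ _) ?_
  have hterm : ∀ r ∈ p.support,
      |coeff r p * (∏ j, ((k j).descFactorial (r j) : ℝ) / (N.descFactorial (r j))) -
        coeff r p * ∏ j, ((k j : ℝ) / N) ^ r j| ≤ |coeff r p| * ((d : ℝ) * d / N) := by
    intro r hr
    rw [← mul_sub, abs_mul]
    exact mul_le_mul_of_nonneg_left (key r hr) (abs_nonneg _)
  refine le_trans (Finset.sum_le_sum hterm) ?_
  rw [← Finset.sum_mul]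
  have hMR : (A * d * d / ε) < N := by
    refine lt_of_lt_of_le hM ?_
    exact_mod_cast Nat.le_of_succ_le hMN
  have h1 : A * d * d < N * ε := by
    rw [div_lt_iff₀ hε] at hMR
    linarith
  have heq : A * ((d:ℝ) * d / N) = A * d * d / N := by ring
  rw [heq, div_le_iff₀ hNR]
  linarith [mul_comm ε (N:ℝ)]

lemma exists_lambda {m : ℕ} (p₀ E : MvPolynomial (Fin m) ℝ)
    (hE0 : ∀ y : Fin m → ℝ, 0 ≤ eval y E)
    (hp : ∀ y ∈ Set.Icc (0 : Fin m → ℝ) 1, eval y E = 0 → 0 < eval y p₀) :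
    ∃ lam : ℝ, 0 ≤ lam ∧
      ∀ y ∈ Set.Icc (0 : Fin m → ℝ) 1, 0 < eval y p₀ + lam * eval y E := by
  set cube := Set.Icc (0 : Fin m → ℝ) 1 with hcubedef
  have hcube : IsCompact cube := isCompact_Icc
  have contp : Continuous fun y : Fin m → ℝ => eval y p₀ := MvPolynomial.continuous_eval p₀
  have contE : Continuous fun y : Fin m → ℝ => eval y E := MvPolynomial.continuous_eval E
  set C : ℕ → Set (Fin m → ℝ) := fun nn =>
    (cube ∩ {y | eval y p₀ ≤ 0}) ∩ {y | eval y E ≤ 1/(nn+1)} with hC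
  have hCcompact : ∀ nn, IsCompact (C nn) := fun nn =>
    ((hcube.inter_right (isClosed_le contp continuous_const)).inter_right
      (isClosed_le contE continuous_const))
  have hCclosed : ∀ nn, IsClosed (C nn) := fun nn =>
    ((isClosed_Icc.inter (isClosed_le contp continuous_const)).inter
      (isClosed_le contE continuous_const))
  have hCanti : Antitone C := by
    intro a b hab
    apply Set.inter_subset_inter_right
    intro y hy
    simp only [Set.mem_setOf_eq] at *
    have hab' : (a:ℝ) ≤ b := by exact_mod_cast hab
    have h1 : (1:ℝ)/(b+1) ≤ 1/(a+1) := by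
      apply one_div_le_one_div_of_le
      · positivity
      · linarith
    linarith
  have hempty : ∃ nn, C nn = ∅ := by
    by_contra hne
    push_neg at hne
    have hne' : ∀ nn, (C nn).Nonempty := hne
    obtain ⟨y, hy⟩ := IsCompact.nonempty_iInter_of_directed_nonempty_isCompact_isClosed
      C hCanti.directed_ge hne' hCcompact hCclosed
    simp only [Set.mem_iInter] at hy
    have hycube : y ∈ cube := (hy 0).1.1
    have hyp : eval y p₀ ≤ 0 := (hy 0).1.2
    have hyE : eval y E = 0 := by
      refine le_antisymm ?_ (hE0 y)
      by_contra h
      push_neg at h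
      obtain ⟨nn, hnn⟩ := exists_nat_one_div_lt h
      have := (hy nn).2
      simp only [Set.mem_setOf_eq] at this
      linarith
    exact absurd (hp y hycube hyE) (not_lt.mpr hyp)
  obtain ⟨nn, hnn⟩ := hempty
  have hsep : ∀ y ∈ cube, eval y E ≤ 1/(nn+1) → 0 < eval y p₀ := by
    intro y hy hE
    by_contra h
    push_neg at h
    have : y ∈ C nn := ⟨⟨hy, h⟩, hE⟩
    rw [hnn] at this
    exact this.elim
  have hcne : cube.Nonempty := ⟨0, Set.left_mem_Icc.mpr zero_le_one⟩
  obtain ⟨y0, hy0, hmax⟩ := hcube.exists_isMaxOn hcne contp.neg.continuousOn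
  set B := -eval y0 p₀ with hB
  refine ⟨((nn:ℝ)+1) * (|B| + 1), by positivity, ?_⟩
  intro y hy
  rcases le_or_gt (eval y E) (1/(nn+1)) with hle | hgt
  · have h1 := hsep y hy hle
    have h2 : 0 ≤ ((nn:ℝ)+1) * (|B| + 1) * eval y E := by
      have := hE0 y
      positivity
    linarith
  · have h1 : -eval y p₀ ≤ B := hmax hy
    have h2 : B ≤ |B| := le_abs_self _
    have hpos : (0:ℝ) < (nn:ℝ)+1 := by positivity
    have h3 : ((nn:ℝ)+1) * (|B| + 1) * (1/((nn:ℝ)+1)) = |B| + 1 := by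
      field_simp
    have h4 : ((nn:ℝ)+1) * (|B| + 1) * (1/((nn:ℝ)+1))
        < ((nn:ℝ)+1) * (|B| + 1) * eval y E := by
      apply mul_lt_mul_of_pos_left hgt
      positivity
    rw [h3] at h4
    linarith

lemma W_eq {N a r : ℕ} (hr : r ≤ N) :
    ((N.choose a * a.choose r : ℕ) : ℝ) / (N.choose r : ℝ)
      = (N.choose a : ℝ) * ((a.descFactorial r : ℝ) / (N.descFactorial r)) := by
  have h1 : (a.descFactorial r : ℝ) = (r.factorial : ℝ) * (a.choose r : ℝ) := by
    exact_mod_cast Nat.descFactorial_eq_factorial_mul_choose a r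
  have h2 : (N.descFactorial r : ℝ) = (r.factorial : ℝ) * (N.choose r : ℝ) := by
    exact_mod_cast Nat.descFactorial_eq_factorial_mul_choose N r
  have h3 : (0:ℝ) < (N.choose r : ℝ) := by exact_mod_cast Nat.choose_pos hr
  have h4 : (0:ℝ) < (r.factorial : ℝ) := by exact_mod_cast r.factorial_pos
  rw [h1, h2]
  push_cast
  field_simp

lemma eval_aeval' {σ τ : Type*} (φ : σ → MvPolynomial τ ℝ) (h : MvPolynomial σ ℝ)
    (x : τ → ℝ) :
    eval x (aeval φ h) = eval (fun i => eval x (φ i)) h := by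
  have hh : ((eval x).comp
      ((aeval φ : MvPolynomial σ ℝ →ₐ[ℝ] MvPolynomial τ ℝ) :
        MvPolynomial σ ℝ →+* MvPolynomial τ ℝ))
      = eval (fun i => eval x (φ i)) := by
    apply MvPolynomial.ringHom_ext <;> simp
  exact RingHom.congr_fun hh h

/-- Krivine–Stengle–Vasilescu–Handelman Positivstellensatz: if
`K = {x : 0 ≤ g_j(x) ≤ 1, j = 1,…,m}` is compact, the polynomials `1, g_1, …, g_m`
generate `ℝ[x]` as an `ℝ`-algebra, and `f` is strictly positive on `K`, then `f` is a
finite positive linear combination of the products `∏_j g_j^{α_j} (1 - g_j)^{β_j}`. -/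
theorem krivine_stengle {n m : ℕ}
    (f : MvPolynomial (Fin n) ℝ) (g : Fin m → MvPolynomial (Fin n) ℝ)
    (K : Set (Fin n → ℝ))
    (hK : K = {x | ∀ j, 0 ≤ eval x (g j) ∧ eval x (g j) ≤ 1})
    (hcomp : IsCompact K)
    (hgen : Algebra.adjoin ℝ (Set.range g) = (⊤ : Subalgebra ℝ (MvPolynomial (Fin n) ℝ)))
    (hpos : ∀ x ∈ K, 0 < eval x f) :
    ∃ (S : Finset ((Fin m → ℕ) × (Fin m → ℕ))) (c : (Fin m → ℕ) × (Fin m → ℕ) → ℝ),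
      (∀ ab ∈ S, 0 < c ab) ∧
      f = ∑ ab ∈ S, C (c ab) * ∏ j, g j ^ ab.1 j * (1 - g j) ^ ab.2 j := by
  classical
  -- Step 1: surjectivity of `aeval g`
  have hsurj : ∀ h : MvPolynomial (Fin n) ℝ,
      ∃ p' : MvPolynomial (Fin m) ℝ, aeval g p' = h := by
    intro h
    have h1 : h ∈ (aeval g : MvPolynomial (Fin m) ℝ →ₐ[ℝ] MvPolynomial (Fin n) ℝ).range := by
      rw [← Algebra.adjoin_range_eq_range_aeval, hgen]
      exact Algebra.mem_top
    exact h1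
  choose q hq using fun i => hsurj (X i)
  obtain ⟨p₀, hp₀⟩ := hsurj f
  set e : Fin m → MvPolynomial (Fin m) ℝ := fun j => X j - aeval q (g j) with he
  set E : MvPolynomial (Fin m) ℝ := ∑ j, (e j)^2 with hE
  -- Step 2: composition identity
  have hcompid : ∀ h : MvPolynomial (Fin n) ℝ, aeval g (aeval q h) = h := by
    intro h
    have hid : ((aeval g).comp (aeval q) :
        MvPolynomial (Fin n) ℝ →ₐ[ℝ] MvPolynomial (Fin n) ℝ) = AlgHom.id ℝ _ := by
      apply MvPolynomial.algHom_ext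
      intro i
      simp only [AlgHom.coe_comp, Function.comp_apply, aeval_X, AlgHom.id_apply]
      exact hq i
    have := DFunLike.congr_fun hid h
    simpa using this
  have haevalE : ∀ j, aeval g (e j) = 0 := by
    intro j
    simp only [he, map_sub, aeval_X, hcompid (g j), sub_self]
  have hgE : aeval g E = 0 := by
    rw [hE, map_sum]
    refine Finset.sum_eq_zero fun j _ => ?_
    rw [map_pow, haevalE j]
    simp
  -- Step 3: eval facts
  have hEnn : ∀ y : Fin m → ℝ, 0 ≤ eval y E := by
    intro y
    rw [hE, map_sum]
    refine Finset.sum_nonneg fun j _ => ?_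
    rw [map_pow]
    positivity
  have hcube_mem : ∀ y : Fin m → ℝ,
      y ∈ Set.Icc (0 : Fin m → ℝ) 1 ↔ ∀ j, 0 ≤ y j ∧ y j ≤ 1 := by
    intro y
    constructor
    · intro hy j; exact ⟨hy.1 j, hy.2 j⟩
    · intro hy; exact ⟨fun j => (hy j).1, fun j => (hy j).2⟩
  have hEzero : ∀ y ∈ Set.Icc (0 : Fin m → ℝ) 1, eval y E = 0 → 0 < eval y p₀ := by
    intro y hy hEy
    have h1 : ∑ j, (eval y (e j))^2 = 0 := by
      rw [← hEy, hE, map_sum]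
      exact Finset.sum_congr rfl fun j _ => (map_pow _ _ _).symm
    have hej : ∀ j, eval y (e j) = 0 := by
      intro j
      have h2 := (Finset.sum_eq_zero_iff_of_nonneg
        (fun j _ => sq_nonneg (eval y (e j)))).mp h1 j (Finset.mem_univ j)
      exact pow_eq_zero_iff (n := 2) (by norm_num) |>.mp h2
    set x0 : Fin n → ℝ := fun i => eval y (q i) with hx0
    have hgx0 : ∀ j, eval x0 (g j) = y j := by
      intro j
      have h2 : eval y (aeval q (g j)) = eval x0 (g j) := eval_aeval' q (g j) y
      have h3 := hej j
      rw [he] at h3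
      simp only [map_sub, eval_X] at h3
      rw [h2] at h3
      linarith
    have hx0K : x0 ∈ K := by
      rw [hK]
      simp only [Set.mem_setOf_eq]
      intro j
      rw [hgx0 j]
      exact (hcube_mem y).mp hy j
    have h4 : eval x0 f = eval y p₀ := by
      rw [← hp₀, eval_aeval' g p₀ x0]
      have hfun : (fun j => eval x0 (g j)) = y := funext hgx0
      rw [hfun]
    rw [← h4]
    exact hpos x0 hx0K
  obtain ⟨lam, hlam0, hlam⟩ := exists_lambda p₀ E hEnn hEzero
  set p : MvPolynomial (Fin m) ℝ := p₀ + C lam * E with hp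
  have hfp : f = aeval g p := by
    rw [hp, map_add, map_mul, hgE, hp₀, mul_zero, add_zero]
  have hevalp : ∀ y : Fin m → ℝ, eval y p = eval y p₀ + lam * eval y E := by
    intro y; simp [hp]
  have hppos : ∀ y ∈ Set.Icc (0 : Fin m → ℝ) 1, 0 < eval y p := by
    intro y hy
    rw [hevalp]
    exact hlam y hy
  -- Step 4: minimum on the cube
  have hcube : IsCompact (Set.Icc (0 : Fin m → ℝ) 1) := isCompact_Icc
  have hcne : (Set.Icc (0 : Fin m → ℝ) 1).Nonempty := ⟨0, Set.left_mem_Icc.mpr zero_le_one⟩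
  obtain ⟨ystar, hystar, hminOn⟩ := hcube.exists_isMinOn hcne
    (MvPolynomial.continuous_eval p).continuousOn
  set c0 : ℝ := eval ystar p with hc0
  have hc0pos : 0 < c0 := hppos ystar hystar
  have hmin : ∀ y ∈ Set.Icc (0 : Fin m → ℝ) 1, c0 ≤ eval y p := fun y hy => hminOn hy
  obtain ⟨N₁, hN₁⟩ := bern_coeff_est p (half_pos hc0pos)
  set N : ℕ := max (max N₁ p.totalDegree) 1 with hNdef
  have hNtd : p.totalDegree ≤ N := le_trans (le_max_right _ _) (le_max_left _ _)
  have hNN₁ : N₁ ≤ N := le_trans (le_max_left _ _) (le_max_left _ _)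
  have hN1 : 1 ≤ N := le_max_right _ _
  have hrep := bern_rep p hNtd
  set γ : (Fin m → ℕ) → ℝ := fun k => ∑ r ∈ p.support, coeff r p *
    ∏ j, (((N.choose (k j) * (k j).choose (r j) : ℕ) : ℝ) / (N.choose (r j) : ℝ)) with hγ
  have hγpos : ∀ k ∈ Fintype.piFinset (fun _ : Fin m => Finset.range (N+1)), 0 < γ k := by
    intro k hk
    have hkN : ∀ j, k j ≤ N := by
      intro j
      have := Fintype.mem_piFinset.mp hk j
      simp only [Finset.mem_range] at this
      omega
    have hrj' : ∀ r ∈ p.support, ∀ j, r j ≤ N := by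
      intro r hr j
      have h1 : r j ≤ r.sum fun _ e => e := by
        by_cases hj : j ∈ r.support
        · exact Finset.single_le_sum (fun _ _ => Nat.zero_le _) hj
        · simp [Finsupp.notMem_support_iff.mp hj]
      exact h1.trans ((le_totalDegree hr).trans hNtd)
    have hWeq : ∀ r ∈ p.support,
        (∏ j, (((N.choose (k j) * (k j).choose (r j) : ℕ) : ℝ) / (N.choose (r j) : ℝ)))
          = (∏ j, (N.choose (k j) : ℝ)) *
            ∏ j, ((k j).descFactorial (r j) : ℝ) / (N.descFactorial (r j)) := by
      intro r hr
      rw [← Finset.prod_mul_distrib]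
      exact Finset.prod_congr rfl fun j _ => W_eq (hrj' r hr j)
    have hsplit : γ k = (∏ j, (N.choose (k j) : ℝ)) *
        ∑ r ∈ p.support, coeff r p *
          ∏ j, ((k j).descFactorial (r j) : ℝ) / (N.descFactorial (r j)) := by
      rw [hγ, Finset.mul_sum]
      refine Finset.sum_congr rfl fun r hr => ?_
      rw [hWeq r hr]
      ring
    have hχ : 0 < ∏ j, (N.choose (k j) : ℝ) :=
      Finset.prod_pos fun j _ => by exact_mod_cast Nat.choose_pos (hkN j)
    have hyc : (fun j => (k j : ℝ)/N) ∈ Set.Icc (0 : Fin m → ℝ) 1 := by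
      rw [hcube_mem]
      intro j
      have hNR : (0:ℝ) < N := by exact_mod_cast hN1
      constructor
      · positivity
      · rw [div_le_one hNR]
        exact_mod_cast hkN j
    have hest := hN₁ N hNN₁ k hkN
    have h2 : c0 ≤ eval (fun j => (k j : ℝ)/N) p := hmin _ hyc
    have h3 := (abs_le.mp hest).1
    rw [hsplit]
    apply mul_pos hχ
    linarith
  -- Step 5: final assembly
  have hfinal : f = ∑ k ∈ Fintype.piFinset (fun _ : Fin m => Finset.range (N+1)),
      C (γ k) * ∏ j, (g j ^ k j * (1 - g j) ^ (N - k j)) := by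
    rw [hfp]
    conv_lhs => rw [hrep]
    rw [map_sum]
    refine Finset.sum_congr rfl fun k _ => ?_
    rw [map_smul, smul_eq_C_mul]
    congr 1
    rw [map_prod]
    refine Finset.prod_congr rfl fun j _ => ?_
    simp
  refine ⟨(Fintype.piFinset (fun _ : Fin m => Finset.range (N+1))).image
      (fun k => (k, fun j => N - k j)), fun ab => γ ab.1, ?_, ?_⟩
  · intro ab hab
    obtain ⟨k, hk, rfl⟩ := Finset.mem_image.mp hab
    exact hγpos k hk
  · rw [Finset.sum_image (fun k _ k' _ hkk => congrArg Prod.fst hkk)]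
    exact hfinal
end

section
/- Let (θ*¹,...,θ*ᵖ, y*) be an optimal solution of the dual Sparse-BSOS SDP of order d, and let ω be minimal with 2ω ≥ max{deg f, deg g_1, ..., deg g_m}. If rank M_ω(θ*ℓ) = 1 for every ℓ = 1,...,p, then the dual value equals the global optimum f* and the point x* := (y*_γ)_{|γ|=1} (the first-order moments of y*) lies in K and is a global minimizer of f on K. -/
open MvPolynomial

/-- The Riesz functional associated with a (pseudo-)moment sequence `y`. -/
noncomputable def riesz {n : ℕ} (y : (Fin n →₀ ℕ) → ℝ) (f : MvPolynomial (Fin n) ℝ) : ℝ :=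
  ∑ γ ∈ f.support, f.coeff γ * y γ

/-- Positive semidefiniteness of the moment matrix `M_a(y)`, expressed via the
associated quadratic form on coefficient vectors supported on degree at most `a`. -/
def momentPSD {n : ℕ} (a : ℕ) (y : (Fin n →₀ ℕ) → ℝ) : Prop :=
  ∀ c : (Fin n →₀ ℕ) →₀ ℝ, (∀ γ ∈ c.support, (γ.sum fun _ e => e) ≤ a) →
    0 ≤ ∑ α ∈ c.support, ∑ β ∈ c.support, c α * c β * y (α + β)

/-- The moments `x^γ` of the Dirac measure at `x`. -/
noncomputable def monMoment {n : ℕ} (x : Fin n → ℝ) (γ : Fin n →₀ ℕ) : ℝ :=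
  γ.prod fun i e => x i ^ e

/-- Feasibility for the dual Sparse-BSOS SDP of order `d` with parameter `k`:
`y_0 = 1`, `y` agrees with `θ^ℓ` on monomials supported on `I_ℓ` of degree at most
`dmax`, each moment matrix `M_k(θ^ℓ)` is psd, and `L_{θ^ℓ}(h_{αβ}) ≥ 0` for all
`(α,β) ∈ N^ℓ_d`. -/
def DualFeasible {n m p : ℕ} (I : Fin p → Finset (Fin n)) (J : Fin p → Finset (Fin m))
    (g : Fin m → MvPolynomial (Fin n) ℝ) (k d dmax : ℕ)
    (θ : Fin p → (Fin n →₀ ℕ) → ℝ) (y : (Fin n →₀ ℕ) → ℝ) : Prop :=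
  y 0 = 1 ∧
  (∀ ℓ, ∀ γ : Fin n →₀ ℕ, (↑γ.support ⊆ (↑(I ℓ) : Set (Fin n))) →
    (γ.sum fun _ e => e) ≤ dmax → y γ = θ ℓ γ) ∧
  (∀ ℓ, momentPSD k (θ ℓ)) ∧
  (∀ ℓ, ∀ ab : (Fin m → ℕ) × (Fin m → ℕ),
    (∀ j, (ab.1 j ≠ 0 ∨ ab.2 j ≠ 0) → j ∈ J ℓ) → (∑ j, (ab.1 j + ab.2 j)) ≤ d →
    0 ≤ riesz (θ ℓ) (∏ j, g j ^ ab.1 j * (1 - g j) ^ ab.2 j))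

/-- A rank-one factorization of the moment matrix `M_ω(θ)`: `M_ω(θ) = v vᵀ`
with first entry `v_0 = 1`. -/
def RankOneFactor {n : ℕ} (ω : ℕ) (θ : (Fin n →₀ ℕ) → ℝ) : Prop :=
  ∃ v : (Fin n →₀ ℕ) → ℝ, v 0 = 1 ∧
    ∀ α β : Fin n →₀ ℕ, (α.sum fun _ e => e) ≤ ω → (β.sum fun _ e => e) ≤ ω →
      θ (α + β) = v α * v β

/-!
A rank-one moment matrix `M_ω(θ) = v vᵀ` with `v₀ = 1` gives `θ_{α+β} = θ_α θ_β` for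
`|α|, |β| ≤ ω`, so up to degree `2ω` the sequence `θ` is the moment sequence of the Dirac
measure at its first moments. The blocks agree with `y*` on their overlaps, so all these points
are restrictions of `x* = (y*_{e_i})_i`. The localizing constraints of degree one give
`0 ≤ g_j(x*) ≤ 1`, so `x*` is feasible and `L_{y*}(f) = f(x*) ≥ f*`; conversely the Dirac
measure at a minimizer is dual feasible, so by optimality `L_{y*}(f) ≤ f*`.
-/

namespace SparseBSOS

variable {n : ℕ}

/-- The point `x* = (y_{e_i})_i` of first-order moments. -/
noncomputable def firstMoments (y : (Fin n →₀ ℕ) → ℝ) : Fin n → ℝ :=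
  fun i => y (Finsupp.single i 1)

@[simp]
lemma monMoment_zero (x : Fin n → ℝ) : monMoment x 0 = 1 :=
  Finsupp.prod_zero_index

lemma monMoment_add (x : Fin n → ℝ) (α β : Fin n →₀ ℕ) :
    monMoment x (α + β) = monMoment x α * monMoment x β :=
  Finsupp.prod_add_index' (fun _ => pow_zero _) (fun _ _ _ => pow_add _ _ _)

@[simp]
lemma monMoment_single (x : Fin n → ℝ) (i : Fin n) (e : ℕ) :
    monMoment x (Finsupp.single i e) = x i ^ e :=
  Finsupp.prod_single_index (pow_zero _)

lemma riesz_eq_eval {y : (Fin n →₀ ℕ) → ℝ} {x : Fin n → ℝ} {q : MvPolynomial (Fin n) ℝ}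
    (h : ∀ γ ∈ q.support, y γ = monMoment x γ) : riesz y q = eval x q := by
  rw [riesz, eval_eq]
  refine Finset.sum_congr rfl fun γ hγ => ?_
  rw [h γ hγ]
  rfl

@[simp]
lemma riesz_monMoment (x : Fin n → ℝ) (q : MvPolynomial (Fin n) ℝ) :
    riesz (monMoment x) q = eval x q :=
  riesz_eq_eval fun _ _ => rfl

lemma momentPSD_monMoment (a : ℕ) (x : Fin n → ℝ) : momentPSD a (monMoment x) := by
  intro c _
  have hsquare : ∑ α ∈ c.support, ∑ β ∈ c.support, c α * c β * monMoment x (α + β)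
      = (∑ α ∈ c.support, c α * monMoment x α) * (∑ β ∈ c.support, c β * monMoment x β) := by
    rw [Finset.sum_mul_sum]
    refine Finset.sum_congr rfl fun α _ => Finset.sum_congr rfl fun β _ => ?_
    rw [monMoment_add]
    ring
  rw [hsquare]
  exact mul_self_nonneg _

lemma eq_monMoment_firstMoments_of_map_add {v : (Fin n →₀ ℕ) → ℝ} {N : ℕ} (h0 : v 0 = 1)
    (hadd : ∀ α β, (α + β).degree ≤ N → v (α + β) = v α * v β) :
    ∀ γ : Fin n →₀ ℕ, γ.degree ≤ N → v γ = monMoment (firstMoments v) γ := by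
  intro γ
  induction γ using Finsupp.induction_linear with
  | zero => simp [h0]
  | add α β hα hβ =>
    intro h
    have hαN : α.degree ≤ N := (Finsupp.degree_mono le_self_add).trans h
    have hβN : β.degree ≤ N := (Finsupp.degree_mono le_add_self).trans h
    rw [hadd α β h, hα hαN, hβ hβN, monMoment_add]
  | single i e =>
    induction e with
    | zero => simp [h0]
    | succ e ih =>
      intro h
      rw [Finsupp.degree_single] at h
      calc v (Finsupp.single i (e + 1))
          = v (Finsupp.single i e) * v (Finsupp.single i 1) := by
            rw [← hadd _ _ (by simpa using h), Finsupp.single_add]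
        _ = firstMoments v i ^ e * firstMoments v i := by
            rw [ih (by simp; omega), monMoment_single]
            rfl
        _ = monMoment (firstMoments v) (Finsupp.single i (e + 1)) := by
            rw [monMoment_single, pow_succ]

lemma RankOneFactor.eq_monMoment {ω : ℕ} {θ : (Fin n →₀ ℕ) → ℝ} (h : RankOneFactor ω θ)
    {γ : Fin n →₀ ℕ} (hγ : γ.degree ≤ 2 * ω) : θ γ = monMoment (firstMoments θ) γ := by
  obtain ⟨v, hv0, hv⟩ := h
  have hθv : ∀ α : Fin n →₀ ℕ, α.degree ≤ ω → θ α = v α := fun α hα => by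
    simpa [hv0] using hv α 0 hα (by simp)
  have hmul : ∀ α β : Fin n →₀ ℕ, α.degree ≤ ω → β.degree ≤ ω → θ (α + β) = θ α * θ β :=
    fun α β hα hβ => by rw [hv α β hα hβ, hθv α hα, hθv β hβ]
  have hlow : ∀ α : Fin n →₀ ℕ, α.degree ≤ ω → θ α = monMoment (firstMoments θ) α :=
    eq_monMoment_firstMoments_of_map_add ((hθv 0 (by simp)).trans hv0)
      fun α β h => hmul α β ((Finsupp.degree_mono le_self_add).trans h)
        ((Finsupp.degree_mono le_add_self).trans h)
  obtain ⟨α, hαγ, hα⟩ := Finsupp.exists_le_degree_eq γ (min γ.degree ω) (min_le_left _ _)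
  obtain ⟨β, rfl⟩ := le_iff_exists_add.mp hαγ
  have hβ : β.degree ≤ ω := by rw [map_add] at hγ hα; omega
  rw [hmul α β (hα ▸ min_le_right _ _) hβ, hlow α (hα ▸ min_le_right _ _), hlow β hβ,
    monMoment_add]

lemma monMoment_firstMoments_congr {y θ : (Fin n →₀ ℕ) → ℝ} {s : Set (Fin n)} {N : ℕ}
    (hagree : ∀ γ : Fin n →₀ ℕ, ↑γ.support ⊆ s → γ.degree ≤ N → y γ = θ γ)
    {γ : Fin n →₀ ℕ} (hs : ↑γ.support ⊆ s) (hγ : γ.degree ≤ N) :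
    monMoment (firstMoments θ) γ = monMoment (firstMoments y) γ := by
  refine Finsupp.prod_congr fun i hi => ?_
  have hγi : 1 ≤ γ.degree := (Nat.one_le_iff_ne_zero.mpr (Finsupp.mem_support_iff.mp hi)).trans
    (Finsupp.le_degree i γ)
  rw [firstMoments, firstMoments, hagree _ _ (by simp [hγi.trans hγ])]
  simpa using hs hi

lemma support_subset_of_mem_supported {q : MvPolynomial (Fin n) ℝ} {s : Set (Fin n)}
    (hq : q ∈ supported ℝ s) {γ : Fin n →₀ ℕ} (hγ : γ ∈ q.support) : ↑γ.support ⊆ s :=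
  (Finset.coe_subset.mpr (support_subset_vars_of_mem_support hγ)).trans (mem_supported.mp hq)

variable {m p : ℕ} {I : Fin p → Finset (Fin n)} {J : Fin p → Finset (Fin m)}
  {g : Fin m → MvPolynomial (Fin n) ℝ} {k d dmax : ℕ}

lemma dualFeasible_monMoment {x : Fin n → ℝ} (hx : ∀ j, 0 ≤ eval x (g j) ∧ eval x (g j) ≤ 1) :
    DualFeasible I J g k d dmax (fun _ => monMoment x) (monMoment x) := by
  refine ⟨monMoment_zero x, fun _ _ _ _ => rfl, fun _ => momentPSD_monMoment k x, ?_⟩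
  intro ℓ ab _ _
  rw [riesz_monMoment, map_prod]
  refine Finset.prod_nonneg fun j _ => ?_
  rw [map_mul, map_pow, map_pow, map_sub, map_one]
  exact mul_nonneg (pow_nonneg (hx j).1 _) (pow_nonneg (sub_nonneg.mpr (hx j).2) _)

lemma DualFeasible.riesz_nonneg {θ : Fin p → (Fin n →₀ ℕ) → ℝ} {y : (Fin n →₀ ℕ) → ℝ}
    (h : DualFeasible I J g k d dmax θ y) (hd : 1 ≤ d) {ℓ : Fin p} {j : Fin m} (hj : j ∈ J ℓ) :
    0 ≤ riesz (θ ℓ) (g j) ∧ 0 ≤ riesz (θ ℓ) (1 - g j) := by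
  have hsupp : ∀ a b : Fin m → ℕ, (∀ j', a j' ≠ 0 ∨ b j' ≠ 0 → j' = j) →
      ∀ j', a j' ≠ 0 ∨ b j' ≠ 0 → j' ∈ J ℓ := fun a b hab j' h' => hab j' h' ▸ hj
  constructor
  · simpa [Pi.single_apply, pow_ite] using h.2.2.2 ℓ (Pi.single j 1, 0)
      (hsupp _ _ (by simp [Pi.single_apply])) (by simpa using hd)
  · simpa [Pi.single_apply, pow_ite] using h.2.2.2 ℓ (0, Pi.single j 1)
      (hsupp _ _ (by simp [Pi.single_apply])) (by simpa using hd)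

end SparseBSOS

open SparseBSOS in
/-- Sufficient condition for finite convergence: if `(θ*¹,…,θ*ᵖ, y*)` is an optimal
solution of the dual Sparse-BSOS SDP of order `d` and every block moment matrix
`M_ω(θ*ℓ)` has rank one (where `2ω` bounds the degrees of `f` and the `g_j`), then
the dual value equals the global optimum `f*` and the first-order moments
`x* = (y*_γ)_{|γ|=1}` yield a global minimizer of `f` on `K`. -/
theorem rank_one_optimality {n m p : ℕ}
    (I : Fin p → Finset (Fin n)) (J : Fin p → Finset (Fin m))
    (g : Fin m → MvPolynomial (Fin n) ℝ) (f : MvPolynomial (Fin n) ℝ)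
    (k d dmax ω : ℕ)
    (hd : 1 ≤ d) (hω : f.totalDegree ≤ 2 * ω ∧ ∀ j, (g j).totalDegree ≤ 2 * ω)
    (hdmax : 2 * ω ≤ dmax)
    (hg : ∀ ℓ, ∀ j ∈ J ℓ, g j ∈ MvPolynomial.supported ℝ (↑(I ℓ) : Set (Fin n)))
    (hJcover : ∀ j : Fin m, ∃ ℓ, j ∈ J ℓ)
    (hfdec : ∃ F : Fin p → MvPolynomial (Fin n) ℝ, f = ∑ ℓ, F ℓ ∧
      ∀ ℓ, F ℓ ∈ MvPolynomial.supported ℝ (↑(I ℓ) : Set (Fin n)) ∧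
        (F ℓ).totalDegree ≤ dmax)
    (fstar : ℝ)
    (hfstar : IsLeast {v : ℝ | ∃ x : Fin n → ℝ,
      (∀ j, 0 ≤ eval x (g j) ∧ eval x (g j) ≤ 1) ∧ v = eval x f} fstar)
    (θstar : Fin p → (Fin n →₀ ℕ) → ℝ) (ystar : (Fin n →₀ ℕ) → ℝ)
    -- optimal solution of the dual SDP
    (hfeas : DualFeasible I J g k d dmax θstar ystar)
    (hopt : ∀ (θ : Fin p → (Fin n →₀ ℕ) → ℝ) (y : (Fin n →₀ ℕ) → ℝ),
      DualFeasible I J g k d dmax θ y → riesz ystar f ≤ riesz y f)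
    -- rank-one condition on each block moment matrix
    (hrank : ∀ ℓ, RankOneFactor ω (θstar ℓ)) :
    riesz ystar f = fstar ∧
    (∀ j, 0 ≤ eval (fun i => ystar (Finsupp.single i 1)) (g j) ∧
      eval (fun i => ystar (Finsupp.single i 1)) (g j) ≤ 1) ∧
    eval (fun i => ystar (Finsupp.single i 1)) f = fstar := by
  set x := firstMoments ystar
  have hθ : ∀ ℓ γ, ↑γ.support ⊆ (↑(I ℓ) : Set (Fin n)) → γ.degree ≤ 2 * ω →
      θstar ℓ γ = monMoment x γ := fun ℓ γ hs hγ => by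
    rw [(hrank ℓ).eq_monMoment hγ]
    exact monMoment_firstMoments_congr (hfeas.2.1 ℓ) hs (hγ.trans hdmax)
  have hriesz : ∀ ℓ q, q ∈ supported ℝ (↑(I ℓ) : Set (Fin n)) → q.totalDegree ≤ 2 * ω →
      riesz (θstar ℓ) q = eval x q := fun ℓ q hq hdeg =>
    riesz_eq_eval fun γ hγ =>
      hθ ℓ γ (support_subset_of_mem_supported hq hγ) ((le_totalDegree hγ).trans hdeg)
  have hK : ∀ j, 0 ≤ eval x (g j) ∧ eval x (g j) ≤ 1 := by
    intro j
    obtain ⟨ℓ, hj⟩ := hJcover j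
    obtain ⟨hpos, hpos'⟩ := hfeas.riesz_nonneg hd hj
    rw [hriesz ℓ _ (hg ℓ j hj) (hω.2 j)] at hpos
    rw [hriesz ℓ _ (sub_mem (one_mem _) (hg ℓ j hj))
      ((totalDegree_sub _ _).trans (by simp [hω.2 j])), map_sub, map_one] at hpos'
    exact ⟨hpos, by linarith⟩
  have hrf : riesz ystar f = eval x f := by
    obtain ⟨F, hfF, hF⟩ := hfdec
    refine riesz_eq_eval fun γ hγ => ?_
    obtain ⟨ℓ, -, hγℓ⟩ := Finset.mem_biUnion.mp (support_sum (hfF ▸ hγ))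
    have hs := support_subset_of_mem_supported (hF ℓ).1 hγℓ
    have hdeg := (le_totalDegree hγ).trans hω.1
    rw [hfeas.2.1 ℓ γ hs (hdeg.trans hdmax), hθ ℓ γ hs hdeg]
  have hub : riesz ystar f ≤ fstar := by
    obtain ⟨⟨x₀, hx₀, rfl⟩, -⟩ := hfstar
    simpa using hopt _ _ (dualFeasible_monMoment hx₀)
  have heq : riesz ystar f = fstar := hub.antisymm (hrf ▸ hfstar.2 ⟨x, hK, rfl⟩)
  exact ⟨heq, hK, hrf ▸ heq⟩
end
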